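/- Let A be an integral domain and J ⊆ A an ideal such that A is J-adically complete. Let I₁, …, I_s be prime ideals of A⟦t⟧ such that t ∉ I_i for all 1 ≤ i ≤ s, and let c be a nonzero element of the ideal (J) of A⟦t⟧ generated by the image of J. Then the set of integers p ≥ 1 for which there exists some 1 ≤ i ≤ s with t + c^p ∈ I_i has at most s elements. -/

import Mathlib

/-!
If `x + c ^ p` and `x + c ^ q` with `p < q` both lie in a prime `P`, then so does their
difference `c ^ p * (1 - c ^ (q - p))`. When `c` is in the Jacobson radical the second factor is
a unit, so `c ^ p ∈ P`, hence `c ^ q ∈ P` and finally `x ∈ P`. Thus each prime avoiding `x`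
accounts for at most one exponent. For `x = X` in `A⟦X⟧` this applies because `J` lies in the
Jacobson radical of the `J`-adically complete ring `A`, and a power series whose constant
coefficient is in the Jacobson radical is itself in the Jacobson radical.
-/

theorem Ideal.IsPrime.eq_of_add_pow_mem {R : Type*} [CommRing R] {P : Ideal R} (hP : P.IsPrime)
    {x c : R} (hx : x ∉ P) (hc : c ∈ (⊥ : Ideal R).jacobson) {p q : ℕ}
    (hp : x + c ^ p ∈ P) (hq : x + c ^ q ∈ P) : p = q := by
  wlog hpq : p < q generalizing p q
  · rcases (not_lt.1 hpq).lt_or_eq with h | h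
    · exact (this hq hp h).symm
    · exact h.symm
  exfalso
  have hunit : IsUnit (1 - c ^ (q - p)) := by
    simpa [sub_eq_add_neg, add_comm] using
      Ideal.mem_jacobson_bot.1 (Ideal.pow_mem_of_mem _ hc (q - p) (by omega)) (-1)
  have hdiff : c ^ p * (1 - c ^ (q - p)) ∈ P := by
    convert P.sub_mem hp hq using 1
    rw [mul_sub, mul_one, ← pow_add, Nat.add_sub_cancel' hpq.le]
    ring
  have hcp : c ^ p ∈ P := (hP.mem_or_mem hdiff).resolve_right fun h ↦
    hP.ne_top (P.eq_top_of_isUnit_mem h hunit)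
  have hcq : c ^ q ∈ P := by
    rw [← Nat.add_sub_cancel' hpq.le, pow_add]
    exact P.mul_mem_right _ hcp
  exact hx (by simpa using P.sub_mem hq hcq)

namespace PowerSeries

variable {A : Type*} [CommRing A]

theorem mem_jacobson_bot_of_constantCoeff_mem {φ : A⟦X⟧}
    (hφ : constantCoeff φ ∈ (⊥ : Ideal A).jacobson) : φ ∈ (⊥ : Ideal A⟦X⟧).jacobson := by
  refine Ideal.mem_jacobson_bot.2 fun ψ ↦ ?_
  rw [isUnit_iff_constantCoeff, map_add, map_mul, map_one]
  exact Ideal.mem_jacobson_bot.1 hφ _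

theorem map_C_le_jacobson_bot {J : Ideal A} (hJ : J ≤ (⊥ : Ideal A).jacobson) :
    J.map (C : A →+* A⟦X⟧) ≤ (⊥ : Ideal A⟦X⟧).jacobson :=
  Ideal.map_le_iff_le_comap.2 fun a ha ↦
    mem_jacobson_bot_of_constantCoeff_mem (by simpa using hJ ha)

end PowerSeries

theorem powerSeries_bad_exponents_card_le_general
    {A : Type*} [CommRing A] (J : Ideal A) [IsAdicComplete J A]
    (s : ℕ) (I : Fin s → Ideal (PowerSeries A))
    (hprime : ∀ i, (I i).IsPrime)
    (htX : ∀ i, (PowerSeries.X : PowerSeries A) ∉ I i)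
    (c : PowerSeries A) (hcJ : c ∈ Ideal.map (PowerSeries.C : A →+* PowerSeries A) J) :
    {p : ℕ | 1 ≤ p ∧ ∃ i, PowerSeries.X + c ^ p ∈ I i}.encard ≤ (s : ℕ∞) := by
  have hc : c ∈ (⊥ : Ideal (PowerSeries A)).jacobson :=
    PowerSeries.map_C_le_jacobson_bot (IsAdicComplete.le_jacobson_bot J) hcJ
  have hsub : {p : ℕ | 1 ≤ p ∧ ∃ i, PowerSeries.X + c ^ p ∈ I i} ⊆
      ⋃ i, {p | PowerSeries.X + c ^ p ∈ I i} := fun p ⟨_, i, hi⟩ ↦ Set.mem_iUnion.2 ⟨i, hi⟩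
  have hone : ∀ i, {p | PowerSeries.X + c ^ p ∈ I i}.encard ≤ 1 := fun i ↦
    Set.encard_le_one_iff.2 fun _ _ hp hq ↦ (hprime i).eq_of_add_pow_mem (htX i) hc hp hq
  calc _ ≤ (⋃ i, {p | PowerSeries.X + c ^ p ∈ I i}).encard := Set.encard_le_encard hsub
    _ ≤ ∑ i, {p | PowerSeries.X + c ^ p ∈ I i}.encard := Set.encard_iUnion_le_of_fintype _
    _ ≤ ∑ _i : Fin s, 1 := Finset.sum_le_sum fun i _ ↦ hone i
    _ = s := by simp

/-- Let `A` be an integral domain which is `J`-adically complete, `I₁, …, I_s` prime ideals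
of `A⟦t⟧` not containing `t`, and `c` a nonzero element of the ideal `(J)` of `A⟦t⟧`
generated by the image of `J`.  Then the set of integers `p ≥ 1` such that `t + c^p` lies in
some `I_i` has at most `s` elements. -/
theorem powerSeries_bad_exponents_card_le
    {A : Type*} [CommRing A] [IsDomain A] (J : Ideal A) [IsAdicComplete J A]
    (s : ℕ) (I : Fin s → Ideal (PowerSeries A))
    (hprime : ∀ i, (I i).IsPrime)
    (htX : ∀ i, (PowerSeries.X : PowerSeries A) ∉ I i)
    (c : PowerSeries A) (hcJ : c ∈ Ideal.map (PowerSeries.C : A →+* PowerSeries A) J) (hc0 : c ≠ 0) :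
    {p : ℕ | 1 ≤ p ∧ ∃ i, PowerSeries.X + c ^ p ∈ I i}.encard ≤ (s : ℕ∞) :=
  powerSeries_bad_exponents_card_le_general J s I hprime htX c hcJ
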